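/- For s ≥ t+1 ≥ 3, the cubic f(λ) = λ^3 + (5-s-3t)λ^2 + (6-4s-2t-st)λ + (2-2s-st) satisfies f(0) < 0, f(-2/3) < 0 and f(-1) > 0; consequently f has exactly one root in each of (0,∞), (-1,-2/3), and (-∞,-1). -/
import Mathlib

/-- A monic cubic cannot have four distinct roots. -/
lemma four_roots (B C D p q r w : ℝ)
    (hpq : p ≠ q) (hpr : p ≠ r) (hqr : q ≠ r)
    (hwp : w ≠ p) (hwq : w ≠ q) (hwr : w ≠ r)
    (hp : p^3 + B*p^2 + C*p + D = 0)
    (hq : q^3 + B*q^2 + C*q + D = 0)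
    (hr : r^3 + B*r^2 + C*r + D = 0)
    (hww : w^3 + B*w^2 + C*w + D = 0) : False := by
  have e1 : (p - q) * (p^2 + p*q + q^2 + B*(p+q) + C) = 0 := by
    linear_combination hp - hq
  have e2 : (p - r) * (p^2 + p*r + r^2 + B*(p+r) + C) = 0 := by
    linear_combination hp - hr
  have e3 : (p - w) * (p^2 + p*w + w^2 + B*(p+w) + C) = 0 := by
    linear_combination hp - hww
  have E1 := (mul_eq_zero.mp e1).resolve_left (sub_ne_zero.mpr hpq)
  have E2 := (mul_eq_zero.mp e2).resolve_left (sub_ne_zero.mpr hpr)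
  have E3 := (mul_eq_zero.mp e3).resolve_left (sub_ne_zero.mpr (Ne.symm hwp))
  have s1 : (q - r) * (p + q + r + B) = 0 := by linear_combination E1 - E2
  have s2 : (q - w) * (p + q + w + B) = 0 := by linear_combination E1 - E3
  have h1 := (mul_eq_zero.mp s1).resolve_left (sub_ne_zero.mpr hqr)
  have h2 := (mul_eq_zero.mp s2).resolve_left (sub_ne_zero.mpr (Ne.symm hwq))
  exact hwr (by linarith)

theorem cubic_root_location (s t : ℤ) (ht : 2 ≤ t) (hst : t + 1 ≤ s)
    (f : ℝ → ℝ)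
    (hf : ∀ x, f x = x ^ 3 + (5 - (s : ℝ) - 3 * t) * x ^ 2
        + (6 - 4 * (s : ℝ) - 2 * t - s * t) * x + (2 - 2 * (s : ℝ) - s * t)) :
    f 0 < 0 ∧ f (-2/3) < 0 ∧ f (-1) > 0 ∧
    (∃! x : ℝ, x ∈ Set.Ioi (0:ℝ) ∧ f x = 0) ∧
    (∃! x : ℝ, x ∈ Set.Ioo (-1 : ℝ) (-2/3) ∧ f x = 0) ∧
    (∃! x : ℝ, x ∈ Set.Iio (-1 : ℝ) ∧ f x = 0) := by
  have ht' : (2:ℝ) ≤ (t:ℝ) := by exact_mod_cast ht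
  have hts : (t:ℝ) + 1 ≤ (s:ℝ) := by exact_mod_cast hst
  have hs : (3:ℝ) ≤ (s:ℝ) := by linarith
  have hf0 : f 0 < 0 := by rw [hf]; nlinarith
  have hf23 : f (-2/3) < 0 := by rw [hf]; nlinarith
  have hf1 : f (-1) > 0 := by rw [hf]; nlinarith
  set M : ℝ := (s:ℝ) * t + s + 3 * t with hM
  have hM15 : (15:ℝ) ≤ M := by nlinarith
  have hMpos : (0:ℝ) < M := by linarith
  have h6 : (6:ℝ) ≤ (s:ℝ) * t := by nlinarith
  have hfM : f M > 0 := by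
    rw [hf]
    have key : M ^ 3 + (5 - (s:ℝ) - 3*t) * M ^ 2 + (6 - 4*(s:ℝ) - 2*t - s*t) * M
        + (2 - 2*(s:ℝ) - s*t)
        = ((s:ℝ)*t + 5) * M^2 + (6 - 4*(s:ℝ) - 2*t - s*t) * M + (2 - 2*(s:ℝ) - s*t) := by
      rw [hM]; ring
    rw [key]
    nlinarith [mul_nonneg (by linarith : (0:ℝ) ≤ (s:ℝ)*t - 6) (sq_nonneg M),
      mul_nonneg (by rw [hM]; nlinarith : (0:ℝ) ≤ 4*M - ((s:ℝ)*t + 4*s + 2*t - 6)) hMpos.le,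
      mul_pos hMpos hMpos, hM15, sq_nonneg (M - 15)]
  have hfmM : f (-M) < 0 := by
    rw [hf]
    have key : (-M) ^ 3 + (5 - (s:ℝ) - 3*t) * (-M) ^ 2 + (6 - 4*(s:ℝ) - 2*t - s*t) * (-M)
        + (2 - 2*(s:ℝ) - s*t)
        = -(((s:ℝ)*t - 5 + 2*((s:ℝ) + 3*t)) * M^2) + ((s:ℝ)*t + 4*s + 2*t - 6) * M
        + (2 - 2*(s:ℝ) - s*t) := by
      rw [hM]; ring
    rw [key]
    nlinarith [mul_nonneg (by linarith : (0:ℝ) ≤ (s:ℝ)*t - 6) (sq_nonneg M),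
      mul_nonneg (by rw [hM]; nlinarith : (0:ℝ) ≤ 4*M - ((s:ℝ)*t + 4*s + 2*t - 6)) hMpos.le,
      mul_pos hMpos hMpos, hM15, sq_nonneg (M - 15)]
  have hcont : Continuous f := by
    have : f = fun x => x ^ 3 + (5 - (s : ℝ) - 3 * t) * x ^ 2
        + (6 - 4 * (s : ℝ) - 2 * t - s * t) * x + (2 - 2 * (s : ℝ) - s * t) :=
      funext hf
    rw [this]; continuity
  -- roots via IVT
  obtain ⟨x3, hx3mem, hx3⟩ : ∃ x ∈ Set.Ioo (0:ℝ) M, f x = 0 := by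
    have := intermediate_value_Ioo (by linarith : (0:ℝ) ≤ M) hcont.continuousOn
      (Set.mem_Ioo.mpr ⟨hf0, hfM⟩)
    obtain ⟨x, hx, hxe⟩ := this
    exact ⟨x, hx, hxe⟩
  obtain ⟨x2, hx2mem, hx2⟩ : ∃ x ∈ Set.Ioo (-1:ℝ) (-2/3), f x = 0 := by
    have := intermediate_value_Ioo' (by norm_num : (-1:ℝ) ≤ -2/3) hcont.continuousOn
      (Set.mem_Ioo.mpr ⟨hf23, hf1⟩)
    obtain ⟨x, hx, hxe⟩ := this
    exact ⟨x, hx, hxe⟩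
  obtain ⟨x1, hx1mem, hx1⟩ : ∃ x ∈ Set.Ioo (-M) (-1:ℝ), f x = 0 := by
    have := intermediate_value_Ioo (by linarith : (-M:ℝ) ≤ -1) hcont.continuousOn
      (Set.mem_Ioo.mpr ⟨hfmM, hf1⟩)
    obtain ⟨x, hx, hxe⟩ := this
    exact ⟨x, hx, hxe⟩
  have hroot : ∀ y : ℝ, f y = 0 →
      y^3 + (5 - (s:ℝ) - 3*t)*y^2 + (6 - 4*(s:ℝ) - 2*t - s*t)*y + (2 - 2*(s:ℝ) - s*t) = 0 := by
    intro y hy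
    rw [hf] at hy
    linear_combination hy
  obtain ⟨h1l, h1r⟩ := hx1mem
  obtain ⟨h2l, h2r⟩ := hx2mem
  obtain ⟨h3l, h3r⟩ := hx3mem
  refine ⟨hf0, hf23, hf1, ?_, ?_, ?_⟩
  · refine ⟨x3, ⟨h3l, hx3⟩, ?_⟩
    rintro y ⟨hy, hfy⟩
    simp only [Set.mem_Ioi] at hy
    by_contra hne
    exact four_roots _ _ _ x1 x2 y x3
      (ne_of_lt (by linarith)) (ne_of_lt (by linarith)) (ne_of_lt (by linarith))
      (ne_of_gt (by linarith)) (ne_of_gt (by linarith)) (Ne.symm hne)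
      (hroot _ hx1) (hroot _ hx2) (hroot _ hfy) (hroot _ hx3)
  · refine ⟨x2, ⟨⟨h2l, h2r⟩, hx2⟩, ?_⟩
    rintro y ⟨hy, hfy⟩
    obtain ⟨hyl, hyr⟩ := hy
    by_contra hne
    exact four_roots _ _ _ x1 y x3 x2
      (ne_of_lt (by linarith)) (ne_of_lt (by linarith)) (ne_of_lt (by linarith))
      (ne_of_gt (by linarith)) (Ne.symm hne) (ne_of_lt (by linarith))
      (hroot _ hx1) (hroot _ hfy) (hroot _ hx3) (hroot _ hx2)
  · refine ⟨x1, ⟨h1r, hx1⟩, ?_⟩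
    rintro y ⟨hy, hfy⟩
    simp only [Set.mem_Iio] at hy
    by_contra hne
    exact four_roots _ _ _ y x2 x3 x1
      (ne_of_lt (by linarith)) (ne_of_lt (by linarith)) (ne_of_lt (by linarith))
      (Ne.symm hne) (ne_of_lt (by linarith)) (ne_of_lt (by linarith))
      (hroot _ hfy) (hroot _ hx2) (hroot _ hx3) (hroot _ hx1)
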